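/- arXiv:1610.00858 — 2 statements merged into one kernel-verified Lean document; each statement's English description precedes it below -/
import Mathlib

section
/- For every k ∈ ω and all m, n with 3 ≤ m, n ≤ ω, the poset P_k is not (m,n)-representable. -/
open Cardinal

universe u

/-- A field of sets: a collection of subsets of `X` closed under finite unions,
finite intersections, and complements. -/
def IsFieldOfSets {X : Type u} (F : Set (Set X)) : Prop :=
  ∅ ∈ F ∧ Set.univ ∈ F ∧ (∀ A ∈ F, ∀ B ∈ F, A ∪ B ∈ F) ∧
    (∀ A ∈ F, ∀ B ∈ F, A ∩ B ∈ F) ∧ (∀ A ∈ F, Aᶜ ∈ F)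

/-- A poset `P` is `(α,β)`-representable if there is a field of sets `F` and an
injective map `h : P → F` preserving all existing meets of sets of cardinality `< α`
and all existing joins of sets of cardinality `< β`. -/
def IsRepresentable (α β : Cardinal.{u}) (P : Type u) [PartialOrder P] : Prop :=
  ∃ (X : Type u) (F : Set (Set X)) (h : P → Set X),
    IsFieldOfSets F ∧ (∀ p : P, h p ∈ F) ∧ Function.Injective h ∧
    (∀ S : Set P, #S < α → ∀ a : P, IsGLB S a → h a = ⋂ s ∈ S, h s) ∧
    (∀ T : Set P, #T < β → ∀ a : P, IsLUB T a → h a = ⋃ t ∈ T, h t)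

/-- The levels `N n`: `N 0` has four elements (`a`, `b`, `c`, `d`), and `N (n+1)` has one
element `e_{xy}` for each unordered pair of distinct elements `x`, `y` of `N n`. -/
def N : ℕ → Type
  | 0 => Fin 4
  | n + 1 => { s : Sym2 (N n) // ¬s.IsDiag }

/-- The element `e_{xy}` of `N (n+1)` corresponding to distinct `x y : N n`. -/
def mkE {n : ℕ} (x y : N n) (h : x ≠ y) : N (n + 1) :=
  ⟨s(x, y), by simp [h]⟩

/-- The carrier of the poset `P_k`: the elements `p`, `q`, the elements of `N n` for
`n ≤ k` (constructor `node`), and two elements `x'` (constructor `prime`) and `x''`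
(constructor `dprime`) for every element `x` of `N n` with `n ≤ k`. -/
inductive Elt (k : ℕ) : Type
  | p : Elt k
  | q : Elt k
  | node (n : ℕ) (hn : n ≤ k) (x : N n) : Elt k
  | prime (n : ℕ) (hn : n ≤ k) (x : N n) : Elt k
  | dprime (n : ℕ) (hn : n ≤ k) (x : N n) : Elt k

/-- The order on `P_k`: (1) `x < p` for `x ∈ N₀`; (2) `x < x'` and `x < x''` for
`x ∈ N_n`, `n ≤ k`; (3) `e_{xy} < x', x'', y', y''` for `e_{xy} ∈ N_{n+1}`, `n + 1 ≤ k`;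
(4) `q < x'` and `q < x''` for `x ∈ N_k`; (5) reflexivity; and nothing else. -/
inductive Le (k : ℕ) : Elt k → Elt k → Prop
  | refl (x : Elt k) : Le k x x
  | node_p (h0 : 0 ≤ k) (x : N 0) : Le k (.node 0 h0 x) .p
  | node_prime (n : ℕ) (hn : n ≤ k) (x : N n) : Le k (.node n hn x) (.prime n hn x)
  | node_dprime (n : ℕ) (hn : n ≤ k) (x : N n) : Le k (.node n hn x) (.dprime n hn x)
  | e_prime (n : ℕ) (hn : n + 1 ≤ k) (e : N (n + 1)) (x : N n) (hx : x ∈ e.1) :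
      Le k (.node (n + 1) hn e) (.prime n (Nat.le_of_succ_le hn) x)
  | e_dprime (n : ℕ) (hn : n + 1 ≤ k) (e : N (n + 1)) (x : N n) (hx : x ∈ e.1) :
      Le k (.node (n + 1) hn e) (.dprime n (Nat.le_of_succ_le hn) x)
  | q_prime (x : N k) : Le k .q (.prime k le_rfl x)
  | q_dprime (x : N k) : Le k .q (.dprime k le_rfl x)

lemma Le.eq_of_le_node {k n : ℕ} {x : Elt k} {hn : n ≤ k} {w : N n}
    (h : Le k x (Elt.node n hn w)) : x = Elt.node n hn w := by
  cases h; rfl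

lemma Le.eq_of_le_q {k : ℕ} {x : Elt k} (h : Le k x Elt.q) : x = Elt.q := by
  cases h; rfl

lemma Le.left_cases {k : ℕ} {x y : Elt k} (h : Le k x y) :
    x = y ∨ (∃ n hn w, x = Elt.node n hn w) ∨ x = Elt.q := by
  cases h with
  | refl => exact Or.inl rfl
  | node_p h0 w => exact Or.inr (Or.inl ⟨_, _, _, rfl⟩)
  | node_prime n hn w => exact Or.inr (Or.inl ⟨_, _, _, rfl⟩)
  | node_dprime n hn w => exact Or.inr (Or.inl ⟨_, _, _, rfl⟩)
  | e_prime n hn e w hw => exact Or.inr (Or.inl ⟨_, _, _, rfl⟩)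
  | e_dprime n hn e w hw => exact Or.inr (Or.inl ⟨_, _, _, rfl⟩)
  | q_prime w => exact Or.inr (Or.inr rfl)
  | q_dprime w => exact Or.inr (Or.inr rfl)

/-- `P_k` as a partial order, with order relation `Le k`. -/
instance EltPartialOrder (k : ℕ) : PartialOrder (Elt k) where
  le := Le k
  le_refl := Le.refl
  le_trans := by
    intro x y z h1 h2
    rcases h2.left_cases with rfl | ⟨n, hn, w, rfl⟩ | rfl
    · exact h1
    · rw [h1.eq_of_le_node]; exact h2
    · rw [h1.eq_of_le_q]; exact h2
  le_antisymm := by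
    intro x y h1 h2
    rcases h1.left_cases with rfl | ⟨n, hn, w, rfl⟩ | rfl
    · rfl
    · exact (h2.eq_of_le_node).symm
    · exact (h2.eq_of_le_q).symm

/-! Only binary meets and joins are needed, and a map preserving binary meets is monotone.
Suppose a point `t` lies in `h p` but not in `h w` for some `w ∈ N₀`, and call `x` marked
when `t ∈ h x`. As `p = x ⊔ y` for distinct `x, y ∈ N₀`, the three elements of `N₀` other
than `w` are marked, and `t ∉ h w'` since `w = p ⊓ w'`. This configuration (three marked
elements of `N_n`, and a `w ∈ N_n` with `t ∉ h w'`) climbs one level: `e_{xy} = x' ⊓ y'` is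
marked whenever `x` and `y` are, and for marked `x` the identities
`e_{xw} = x' ⊓ w' = x' ⊓ e_{xw}'` give `t ∉ h e_{xw}'`. At level `k`, `q = x' ⊓ y'` for
marked `x ≠ y`, so `t ∈ h q ⊆ h w'`, a contradiction. Hence `h` identifies `p` with every
element of `N₀`. -/

section PairBounds

variable {P : Type*} [PartialOrder P]

theorem isGLB_pair_of_le {a b : P} (h : a ≤ b) : IsGLB {a, b} a :=
  IsLeast.isGLB ⟨Set.mem_insert a {b}, by rintro c (rfl | rfl); exacts [le_rfl, h]⟩

theorem isGLB_pair_of_forall_eq {u v a : P} (hu : a ≤ u) (hv : a ≤ v)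
    (h : ∀ b, b ≤ u → b ≤ v → b = a) : IsGLB {u, v} a :=
  ⟨by rintro c (rfl | rfl) <;> assumption, fun b hb =>
    (h b (hb (Set.mem_insert u {v})) (hb (Set.mem_insert_of_mem u rfl))).le⟩

theorem isLUB_pair_of_forall_eq {u v a : P} (hu : u ≤ a) (hv : v ≤ a)
    (h : ∀ b, u ≤ b → v ≤ b → b = a) : IsLUB {u, v} a :=
  isGLB_pair_of_forall_eq (P := Pᵒᵈ) hu hv h

variable {X : Type*}

def PreservesPairMeets (h : P → Set X) : Prop :=
  ∀ u v a : P, IsGLB {u, v} a → h a = h u ∩ h v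

def PreservesPairJoins (h : P → Set X) : Prop :=
  ∀ u v a : P, IsLUB {u, v} a → h a = h u ∪ h v

theorem PreservesPairMeets.monotone {h : P → Set X} (hm : PreservesPairMeets h) :
    Monotone h := fun a b hab => by
  rw [hm a b a (isGLB_pair_of_le hab)]
  exact Set.inter_subset_right

end PairBounds

theorem Cardinal.mk_pair_lt_of_three_le {P : Type u} (u v : P) {α : Cardinal.{u}}
    (hα : 3 ≤ α) : #({u, v} : Set P) < α := by
  have : #({u, v} : Set P) ≤ 2 := by
    refine mk_insert_le.trans ?_
    rw [mk_singleton]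
    norm_num
  exact this.trans_lt (lt_of_lt_of_le (by norm_num) hα)

theorem IsRepresentable.exists_injective_preserves {α β : Cardinal.{u}} {P : Type u}
    [PartialOrder P] (hα : 3 ≤ α) (hβ : 3 ≤ β) (hP : IsRepresentable α β P) :
    ∃ (X : Type u) (h : P → Set X), Function.Injective h ∧ PreservesPairMeets h ∧
      PreservesPairJoins h := by
  obtain ⟨X, -, h, -, -, hinj, hmeet, hjoin⟩ := hP
  refine ⟨X, h, hinj, fun u v a ha => ?_, fun u v a ha => ?_⟩
  · rw [hmeet _ (mk_pair_lt_of_three_le u v hα) a ha, Set.biInter_pair]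
  · rw [hjoin _ (mk_pair_lt_of_three_le u v hβ) a ha, Set.biUnion_pair]

theorem eq_mkE_of_mem {n : ℕ} {e : N (n + 1)} {x y : N n} (hxy : x ≠ y) (hx : x ∈ e.1)
    (hy : y ∈ e.1) : e = mkE x y hxy :=
  Subtype.ext ((Sym2.mem_and_mem_iff hxy).mp ⟨hx, hy⟩)

theorem mkE_eq_mkE_iff {n : ℕ} {a b c d : N n} {hab : a ≠ b} {hcd : c ≠ d} :
    mkE a b hab = mkE c d hcd ↔ s(a, b) = s(c, d) :=
  Subtype.mk_eq_mk

namespace Elt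

variable {k : ℕ}

/- Every strict inequality of `P_k` goes from a bottom element to a top one, so each bound below
is the only common bound of its pair, and `cases` on `Le` lists the candidates. -/

theorem isLUB_node_zero {x y : N 0} (hxy : x ≠ y) :
    IsLUB {node 0 (Nat.zero_le k) x, node 0 (Nat.zero_le k) y} (p : Elt k) :=
  isLUB_pair_of_forall_eq (Le.node_p _ x) (Le.node_p _ y) fun b hx hy => by
    cases hx <;> cases hy <;> first | rfl | exact absurd rfl hxy

theorem isGLB_p_prime (x : N 0) :
    IsGLB {p, prime 0 (Nat.zero_le k) x} (node 0 (Nat.zero_le k) x : Elt k) :=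
  isGLB_pair_of_forall_eq (Le.node_p _ x) (Le.node_prime _ _ x) fun b hp hx => by
    cases hp <;> cases hx
    rfl

theorem isGLB_prime_prime_succ {n : ℕ} (hn : n + 1 ≤ k) {x y : N n} (hxy : x ≠ y) :
    IsGLB {prime n (Nat.le_of_succ_le hn) x, prime n (Nat.le_of_succ_le hn) y}
      (node (n + 1) hn (mkE x y hxy) : Elt k) :=
  isGLB_pair_of_forall_eq (Le.e_prime n hn _ x (Sym2.mem_mk_left x y))
    (Le.e_prime n hn _ y (Sym2.mem_mk_right x y)) fun b hx hy => by
    cases hx <;> cases hy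
    all_goals first
      | exact absurd rfl hxy
      | omega
      | (congr 1; exact eq_mkE_of_mem hxy ‹x ∈ _› ‹y ∈ _›)

theorem isGLB_prime_prime_node {n : ℕ} (hn : n + 1 ≤ k) {x : N n} {e : N (n + 1)}
    (hx : x ∈ e.1) :
    IsGLB {prime n (Nat.le_of_succ_le hn) x, prime (n + 1) hn e} (node (n + 1) hn e : Elt k) :=
  isGLB_pair_of_forall_eq (Le.e_prime n hn e x hx) (Le.node_prime _ _ e) fun b hx he => by
    cases hx <;> cases he
    rfl

theorem isGLB_prime_prime_top {x y : N k} (hxy : x ≠ y) :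
    IsGLB {prime k le_rfl x, prime k le_rfl y} (q : Elt k) :=
  isGLB_pair_of_forall_eq (Le.q_prime x) (Le.q_prime y) fun b hx hy => by
    cases hx <;> cases hy
    all_goals first | rfl | exact absurd rfl hxy | omega

variable {X : Type*} {h : Elt k → Set X} {t : X}

def MarkedTriple (h : Elt k → Set X) (t : X) (n : ℕ) (hn : n ≤ k) : Prop :=
  ∃ x y z : N n, x ≠ y ∧ x ≠ z ∧ y ≠ z ∧
    t ∈ h (node n hn x) ∧ t ∈ h (node n hn y) ∧ t ∈ h (node n hn z)

theorem mem_node_mkE (hm : PreservesPairMeets h) {n : ℕ} (hn : n + 1 ≤ k) {x y : N n}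
    (hxy : x ≠ y) (hx : t ∈ h (node n (Nat.le_of_succ_le hn) x))
    (hy : t ∈ h (node n (Nat.le_of_succ_le hn) y)) :
    t ∈ h (node (n + 1) hn (mkE x y hxy)) := by
  rw [hm _ _ _ (isGLB_prime_prime_succ hn hxy)]
  exact ⟨hm.monotone (Le.node_prime _ _ x) hx, hm.monotone (Le.node_prime _ _ y) hy⟩

theorem MarkedTriple.succ (hm : PreservesPairMeets h) {n : ℕ} (hn : n + 1 ≤ k)
    (ht : MarkedTriple h t n (Nat.le_of_succ_le hn)) : MarkedTriple h t (n + 1) hn := by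
  obtain ⟨x, y, z, hxy, hxz, hyz, hx, hy, hz⟩ := ht
  refine ⟨mkE x y hxy, mkE x z hxz, mkE y z hyz, ?_, ?_, ?_, mem_node_mkE hm hn hxy hx hy,
    mem_node_mkE hm hn hxz hx hz, mem_node_mkE hm hn hyz hy hz⟩
  · rwa [Ne, mkE_eq_mkE_iff, Sym2.congr_right]
  · rwa [Ne, mkE_eq_mkE_iff, Sym2.eq_swap, Sym2.congr_right]
  · rwa [Ne, mkE_eq_mkE_iff, Sym2.congr_left]

theorem exists_notMem_prime_succ (hm : PreservesPairMeets h) {n : ℕ} (hn : n + 1 ≤ k)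
    {x w : N n} (hx : t ∈ h (node n (Nat.le_of_succ_le hn) x))
    (hw : t ∉ h (prime n (Nat.le_of_succ_le hn) w)) :
    ∃ e : N (n + 1), t ∉ h (prime (n + 1) hn e) := by
  have hx' : t ∈ h (prime n _ x) := hm.monotone (Le.node_prime _ _ x) hx
  have hxw : x ≠ w := by rintro rfl; exact hw hx'
  refine ⟨mkE x w hxw, fun he => hw ?_⟩
  have hnode : t ∈ h (node (n + 1) hn (mkE x w hxw)) := by
    rw [hm _ _ _ (isGLB_prime_prime_node hn (Sym2.mem_mk_left x w))]
    exact ⟨hx', he⟩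
  rw [hm _ _ _ (isGLB_prime_prime_succ hn hxw)] at hnode
  exact hnode.2

theorem markedTriple_zero (hj : PreservesPairJoins h) {w : N 0} (hp : t ∈ h p)
    (hw : t ∉ h (node 0 (Nat.zero_le k) w)) : MarkedTriple h t 0 (Nat.zero_le k) := by
  have hmem : ∀ v : N 0, v ≠ w → t ∈ h (node 0 (Nat.zero_le k) v) := fun v hv => by
    rw [hj _ _ _ (isLUB_node_zero hv)] at hp
    exact hp.resolve_right hw
  have hex : ∀ w : Fin 4, ∃ x y z : Fin 4,
      x ≠ y ∧ x ≠ z ∧ y ≠ z ∧ x ≠ w ∧ y ≠ w ∧ z ≠ w := by decide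
  obtain ⟨x, y, z, hxy, hxz, hyz, hxw, hyw, hzw⟩ := hex w
  exact ⟨x, y, z, hxy, hxz, hyz, hmem x hxw, hmem y hyw, hmem z hzw⟩

theorem notMem_prime_zero (hm : PreservesPairMeets h) {w : N 0} (hp : t ∈ h p)
    (hw : t ∉ h (node 0 (Nat.zero_le k) w)) : t ∉ h (prime 0 (Nat.zero_le k) w) := by
  rw [hm _ _ _ (isGLB_p_prime w)] at hw
  exact fun hw' => hw ⟨hp, hw'⟩

theorem not_markedTriple_top (hm : PreservesPairMeets h) {w : N k}
    (hw : t ∉ h (prime k le_rfl w)) : ¬MarkedTriple h t k le_rfl := by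
  rintro ⟨x, y, -, hxy, -, -, hx, hy, -⟩
  refine hw (hm.monotone (Le.q_prime w) ?_)
  rw [hm _ _ _ (isGLB_prime_prime_top hxy)]
  exact ⟨hm.monotone (Le.node_prime _ _ x) hx, hm.monotone (Le.node_prime _ _ y) hy⟩

theorem markedTriple_and_exists_notMem_prime (hm : PreservesPairMeets h)
    (hj : PreservesPairJoins h) {w : N 0} (hp : t ∈ h p)
    (hw : t ∉ h (node 0 (Nat.zero_le k) w)) :
    ∀ n (hn : n ≤ k), MarkedTriple h t n hn ∧ ∃ e : N n, t ∉ h (prime n hn e)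
  | 0, _ => ⟨markedTriple_zero hj hp hw, w, notMem_prime_zero hm hp hw⟩
  | n + 1, hn => by
    obtain ⟨htriple, e, he⟩ := markedTriple_and_exists_notMem_prime hm hj hp hw n
      (Nat.le_of_succ_le hn)
    refine ⟨htriple.succ hm hn, ?_⟩
    obtain ⟨x, -, -, -, -, -, hx, -, -⟩ := htriple
    exact exists_notMem_prime_succ hm hn hx he

theorem image_node_zero_eq_image_p (hm : PreservesPairMeets h) (hj : PreservesPairJoins h)
    (w : N 0) : h (node 0 (Nat.zero_le k) w) = h p := by
  refine (hm.monotone (Le.node_p _ w)).antisymm fun t hp => ?_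
  by_contra hw
  obtain ⟨htriple, e, he⟩ := markedTriple_and_exists_notMem_prime hm hj hp hw k le_rfl
  exact not_markedTriple_top hm he htriple

theorem not_injective_of_preserves (hm : PreservesPairMeets h) (hj : PreservesPairJoins h) :
    ¬Function.Injective h := fun hinj => by
  have h01 := hinj ((image_node_zero_eq_image_p hm hj (0 : Fin 4)).trans
    (image_node_zero_eq_image_p hm hj (1 : Fin 4)).symm)
  exact (by decide : (0 : Fin 4) ≠ 1) (eq_of_heq (node.inj h01).2)

end Elt

theorem statement12_general (k : ℕ) (m n : Cardinal.{0})
    (hm3 : 3 ≤ m) (hn3 : 3 ≤ n) :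
    ¬IsRepresentable m n (Elt k) := by
  intro hP
  obtain ⟨X, h, hinj, hm, hj⟩ := hP.exists_injective_preserves hm3 hn3
  exact Elt.not_injective_of_preserves hm hj hinj

/-- For every `k` and all cardinals `m, n` with `3 ≤ m, n ≤ ω`, the poset
`P_k` is not `(m,n)`-representable. -/
theorem statement12 (k : ℕ) (m n : Cardinal.{0})
    (hm3 : 3 ≤ m) (hmω : m ≤ ℵ₀) (hn3 : 3 ≤ n) (hnω : n ≤ ℵ₀) :
    ¬IsRepresentable m n (Elt k) :=
  statement12_general k m n hm3 hn3
end

section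
/- Let U be a non-principal ultrafilter on ω. Then the ultraproduct ∏_U P_i of the sequence of posets P_0, P_1, P_2, ... is (ω,ω)-representable. -/
open Cardinal

universe u

/-- The setoid on `∀ i, P i` identifying functions that agree on a set belonging to `U`. -/
def upSetoid {ι : Type u} (U : Ultrafilter ι) (P : ι → Type u) : Setoid (∀ i, P i) where
  r x y := {i | x i = y i} ∈ U
  iseqv := by
    refine ⟨fun x => by
        rw [show {i | x i = x i} = Set.univ by simp]; exact Filter.univ_mem,
      fun {x y} h => ?_, fun {x y z} h1 h2 => ?_⟩
    · exact Filter.mem_of_superset h fun i hi => hi.symm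
    · filter_upwards [h1, h2] with i hi1 hi2 using hi1.trans hi2

/-- The ultraproduct of the family `P` of posets over the ultrafilter `U`. -/
def UProd {ι : Type u} (U : Ultrafilter ι) (P : ι → Type u) : Type u :=
  Quotient (upSetoid U P)

instance uprodPartialOrder {ι : Type u} (U : Ultrafilter ι) (P : ι → Type u)
    [∀ i, PartialOrder (P i)] : PartialOrder (UProd U P) where
  le := Quotient.lift₂ (fun x y => {i | x i ≤ y i} ∈ U) (by
    intro a₁ b₁ a₂ b₂ h₁ h₂
    apply propext
    constructor <;> intro h
    · filter_upwards [h, h₁, h₂] with i hle he1 he2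
      rw [← he1, ← he2]; exact hle
    · filter_upwards [h, h₁, h₂] with i hle he1 he2
      rw [he1, he2]; exact hle)
  le_refl := by
    rintro ⟨x⟩
    show {i | x i ≤ x i} ∈ U
    rw [show {i | x i ≤ x i} = Set.univ by simp]
    exact Filter.univ_mem
  le_trans := by
    rintro ⟨x⟩ ⟨y⟩ ⟨z⟩ h1 h2
    show {i | x i ≤ z i} ∈ U
    filter_upwards [(h1 : {i | x i ≤ y i} ∈ U), (h2 : {i | y i ≤ z i} ∈ U)] with i u1 u2
      using le_trans u1 u2
  le_antisymm := by
    rintro ⟨x⟩ ⟨y⟩ h1 h2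
    apply Quotient.sound
    show {i | x i = y i} ∈ U
    filter_upwards [(h1 : {i | x i ≤ y i} ∈ U), (h2 : {i | y i ≤ x i} ∈ U)] with i u1 u2
      using le_antisymm u1 u2

/-!
Every `s ≰ t` in `∏_U P_k` is separated by a set that behaves like a prime filter with respect
to all finite meets and joins that exist; the sets of such filters containing a given element
then represent the ultraproduct.

The only join not attained in its index set is `p = ⋁ T` with `T ⊆ {a, b, c, d}`, because an
element strictly below `x'` also lies below `x''`. So if `s ≰ p`, the principal filter `↑s`
works. Otherwise `s` is `p` or a letter `w ∈ N₀`, and we use the cloud of a letter `u ≠ w`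
that is a leaf of `t` (if `t` is standard): `p` together with the standard elements `x, x', x''`
(`x ∈ N_n`, `n` fixed) whose leaves avoid `u`. It is join-prime at `p` because it misses only
one letter. It is closed under existing meets because `q`, at level `k`, has escaped to infinity
in the ultraproduct: the meet of `x'` and `y'` is `e_{xy}`, whose leaves are those of `x` and
`y`, while copies of `x'` and `x''` alone have no meet, since two distinct edges through `x` lie
below both.
-/

open Filter

section Representation

variable {P : Type u} [PartialOrder P]

def IsFinPrimeFilter (F : Set P) : Prop :=
  (∀ S : Set P, S.Finite → ∀ a, IsGLB S a → (a ∈ F ↔ S ⊆ F)) ∧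
    ∀ T : Set P, T.Finite → ∀ a, IsLUB T a → (a ∈ F ↔ ∃ t ∈ T, t ∈ F)

lemma IsFinPrimeFilter.of_isUpperSet {F : Set P} (hF : IsUpperSet F)
    (hmeet : ∀ S : Set P, S.Finite → ∀ a, IsGLB S a → S ⊆ F → a ∈ F)
    (hjoin : ∀ T : Set P, T.Finite → ∀ a, IsLUB T a → a ∈ F → ∃ t ∈ T, t ∈ F) :
    IsFinPrimeFilter F :=
  ⟨fun S hS a ha => ⟨fun haF _ hs => hF (ha.1 hs) haF, hmeet S hS a ha⟩,
    fun T hT a ha => ⟨hjoin T hT a ha, fun ⟨_, ht, htF⟩ => hF (ha.1 ht) htF⟩⟩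

theorem isRepresentable_of_separating
    (H : ∀ a b : P, ¬ a ≤ b → ∃ F, IsFinPrimeFilter F ∧ a ∈ F ∧ b ∉ F) :
    IsRepresentable ℵ₀ ℵ₀ P := by
  let h : P → Set {F : Set P // IsFinPrimeFilter F} := fun a => {F | a ∈ F.1}
  have le_of_subset {a b : P} (hab : h a ⊆ h b) : a ≤ b := by
    by_contra hab'
    obtain ⟨F, hF, haF, hbF⟩ := H a b hab'
    exact hbF (hab (show ⟨F, hF⟩ ∈ h a from haF))
  refine ⟨_, Set.univ, h, ⟨trivial, trivial, fun _ _ _ _ => trivial, fun _ _ _ _ => trivial,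
    fun _ _ => trivial⟩, fun _ => trivial,
    fun a b hab => le_antisymm (le_of_subset hab.le) (le_of_subset hab.ge), ?_, ?_⟩
  · intro S hS a ha
    ext F
    simpa [h, Set.subset_def] using F.2.1 S (Cardinal.lt_aleph0_iff_set_finite.1 hS) a ha
  · intro T hT a ha
    ext F
    simpa [h] using F.2.2 T (Cardinal.lt_aleph0_iff_set_finite.1 hT) a ha

end Representation

namespace UProd

variable {ι : Type u} {U : Ultrafilter ι} {P : ι → Type u}

def mk (U : Ultrafilter ι) (x : ∀ i, P i) : UProd U P := Quotient.mk (upSetoid U P) x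

lemma mk_surjective : Function.Surjective (mk U : (∀ i, P i) → UProd U P) :=
  Quotient.mk_surjective

lemma mk_eq_mk {x y : ∀ i, P i} : mk U x = mk U y ↔ ∀ᶠ i in U, x i = y i :=
  ⟨Quotient.exact, fun h => Quotient.sound h⟩

variable [∀ i, PartialOrder (P i)]

lemma mk_le_mk {x y : ∀ i, P i} : mk U x ≤ mk U y ↔ ∀ᶠ i in U, x i ≤ y i := Iff.rfl

lemma mk_lt_mk {x y : ∀ i, P i} : mk U x < mk U y ↔ ∀ᶠ i in U, x i < y i := by
  simp only [lt_iff_le_not_ge, mk_le_mk, ← Ultrafilter.eventually_not, Filter.eventually_and]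

end UProd

instance N.finite : ∀ n, Finite (N n)
  | 0 => inferInstanceAs (Finite (Fin 4))
  | n + 1 =>
    have := N.finite n
    have : Finite (Sym2 (N n)) := Finite.of_surjective _ Sym2.mk_surjective
    Subtype.finite

lemma mkE_eq_mkE_iff_s14 {n : ℕ} {x y x' y' : N n} {h : x ≠ y} {h' : x' ≠ y'} :
    mkE x y h = mkE x' y' h' ↔ s(x, y) = s(x', y') :=
  Subtype.ext_iff

lemma N.exists_eq_mkE {n : ℕ} (e : N (n + 1)) : ∃ x y h, e = mkE x y h := by
  obtain ⟨z, hz⟩ := e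
  induction z using Sym2.ind with
  | h x y => exact ⟨x, y, fun h => hz (Sym2.mk_isDiag_iff.2 h), rfl⟩

lemma N.exists_three : ∀ n, ∃ a b c : N n, a ≠ b ∧ a ≠ c ∧ b ≠ c
  | 0 => ⟨(0 : Fin 4), (1 : Fin 4), (2 : Fin 4), (by decide : (0 : Fin 4) ≠ 1),
      (by decide : (0 : Fin 4) ≠ 2), (by decide : (1 : Fin 4) ≠ 2)⟩
  | n + 1 => by
    obtain ⟨a, b, c, hab, hac, hbc⟩ := N.exists_three n
    refine ⟨mkE a b hab, mkE a c hac, mkE b c hbc, ?_, ?_, ?_⟩ <;>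
      simp [mkE_eq_mkE_iff_s14, hab, hac, hbc, hab.symm, hbc.symm]

lemma N.exists_edge_through_not_mem {n : ℕ} (g : N n) {s : Set (N (n + 1))}
    (hs : s.Subsingleton) :
    ∃ e : N (n + 1), g ∈ e.1 ∧ e ∉ s := by
  obtain ⟨x, y, hxy, hxg, hyg⟩ : ∃ x y : N n, x ≠ y ∧ g ≠ x ∧ g ≠ y := by
    obtain ⟨a, b, c, hab, hac, hbc⟩ := N.exists_three n
    by_cases ha : g = a
    · exact ⟨b, c, hbc, ha ▸ hab, ha ▸ hac⟩
    by_cases hb : g = b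
    · exact ⟨a, c, hac, hb ▸ hab.symm, hb ▸ hbc⟩
    · exact ⟨a, b, hab, ha, hb⟩
  have hne : mkE g x hxg ≠ mkE g y hyg := by simp [mkE_eq_mkE_iff_s14, hxy, hyg]
  by_contra! h
  exact hne (hs (h _ (Sym2.mem_mk_left g x)) (h _ (Sym2.mem_mk_left g y)))

def leaves : (n : ℕ) → N n → Set (Fin 4)
  | 0, x => {x}
  | n + 1, e => {u | ∃ x ∈ e.1, u ∈ leaves n x}

lemma leaves_mkE {n : ℕ} (x y : N n) (h : x ≠ y) :
    leaves (n + 1) (mkE x y h) = leaves n x ∪ leaves n y := by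
  ext u
  simp [leaves, mkE, Sym2.mem_iff, or_and_right, exists_or]

lemma leaves_nontrivial : ∀ {n : ℕ} (e : N (n + 1)), (leaves (n + 1) e).Nontrivial
  | 0, e => by
    obtain ⟨x, y, h, rfl⟩ := e.exists_eq_mkE
    rw [leaves_mkE]
    exact ⟨x, .inl rfl, y, .inr rfl, h⟩
  | n + 1, e => by
    obtain ⟨x, y, h, rfl⟩ := e.exists_eq_mkE
    rw [leaves_mkE]
    exact (leaves_nontrivial x).mono Set.subset_union_left

lemma leaves_nonempty : ∀ {n : ℕ} (g : N n), (leaves n g).Nonempty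
  | 0, g => Set.singleton_nonempty g
  | _ + 1, g => (leaves_nontrivial g).nonempty

inductive Kind
  | node
  | prime
  | dprime

instance : Finite Kind :=
  Finite.of_surjective ![Kind.node, .prime, .dprime] fun κ => by
    cases κ
    exacts [⟨0, rfl⟩, ⟨1, rfl⟩, ⟨2, rfl⟩]

namespace Elt

def ofKind {k : ℕ} : Kind → (n : ℕ) → n ≤ k → N n → Elt k
  | .node => node
  | .prime => prime
  | .dprime => dprime

/-- The value `q` for `k < n` is arbitrary: a nonprincipal ultrafilter only sees large `k`. -/
def std (κ : Kind) (n : ℕ) (g : N n) (k : ℕ) : Elt k :=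
  if h : n ≤ k then ofKind κ n h g else q

def swap {k : ℕ} : Elt k → Elt k
  | prime n hn x => dprime n hn x
  | dprime n hn x => prime n hn x
  | x => x

variable {k n : ℕ}

lemma std_of_le {κ : Kind} {g : N n} (h : n ≤ k) : std κ n g k = ofKind κ n h g := dif_pos h

lemma std_ne_p {κ : Kind} {g : N n} : std κ n g k ≠ p := by
  unfold std
  split
  · cases κ <;> nofun
  · nofun

lemma sigma_eq_of_ofKind_eq {m : ℕ} {κ κ' : Kind} {hn : n ≤ k} {hm : m ≤ k}
    {g : N n} {x : N m}
    (h : ofKind κ n hn g = ofKind κ' m hm x) : (⟨n, g⟩ : Σ n, N n) = ⟨m, x⟩ := by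
  cases κ <;> cases κ' <;> simp_all [ofKind]

lemma p_le {y : Elt k} (h : p ≤ y) : y = p := by
  cases h; rfl

lemma le_p {y : Elt k} (h : y ≤ p) : y = p ∨ ∃ (w : N 0) (h0 : 0 ≤ k), y = node 0 h0 w := by
  cases h with
  | refl => exact .inl rfl
  | node_p h w => exact .inr ⟨w, h, rfl⟩

lemma not_le_p_of_le_q {y : Elt k} (hp : y ≤ p) (hq : y ≤ q) : False := by
  cases Le.eq_of_le_q hq
  cases hp

lemma eq_of_le_std_node {y : Elt k} {g : N n} (h : y ≤ std .node n g k) :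
    y = std .node n g k := by
  by_cases hn : n ≤ k
  · rw [std_of_le hn] at h ⊢
    exact Le.eq_of_le_node h
  · rw [std, dif_neg hn] at h ⊢
    exact Le.eq_of_le_q h

lemma node_le_ofKind {κ : Kind} {hn : n ≤ k} {g : N n} : node n hn g ≤ ofKind κ n hn g := by
  cases κ
  exacts [le_rfl, Le.node_prime n hn g, Le.node_dprime n hn g]

lemma edge_le_ofKind {κ : Kind} (hκ : κ ≠ .node) {h : n + 1 ≤ k} {e : N (n + 1)} {g : N n}
    (hg : g ∈ e.1) : node (n + 1) h e ≤ ofKind κ n (Nat.le_of_succ_le h) g := by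
  cases κ
  exacts [absurd rfl hκ, Le.e_prime n h e g hg, Le.e_dprime n h e g hg]

lemma ofKind_le {κ : Kind} {hn : n ≤ k} {g : N n} {y : Elt k} (h : ofKind κ n hn g ≤ y) :
    y = p ∨ ∃ κ', ∃ m ∈ Set.Iic n, ∃ x : N m,
      leaves m x ⊆ leaves n g ∧ ∃ hm : m ≤ k, y = ofKind κ' m hm x := by
  cases κ
  · cases h with
    | refl => exact .inr ⟨.node, n, Set.mem_Iic.2 le_rfl, g, subset_rfl, hn, rfl⟩
    | node_p => exact .inl rfl
    | node_prime => exact .inr ⟨.prime, n, Set.mem_Iic.2 le_rfl, g, subset_rfl, hn, rfl⟩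
    | node_dprime => exact .inr ⟨.dprime, n, Set.mem_Iic.2 le_rfl, g, subset_rfl, hn, rfl⟩
    | e_prime m hm e x hx =>
      exact .inr ⟨.prime, m, Set.mem_Iic.2 m.le_succ, x, fun u hu => ⟨x, hx, hu⟩, _, rfl⟩
    | e_dprime m hm e x hx =>
      exact .inr ⟨.dprime, m, Set.mem_Iic.2 m.le_succ, x, fun u hu => ⟨x, hx, hu⟩, _, rfl⟩
  all_goals
    cases h
    exact .inr ⟨_, n, Set.mem_Iic.2 le_rfl, g, subset_rfl, hn, rfl⟩

lemma lt_ofKind {κ : Kind} {hn : n ≤ k} {g : N n} {y : Elt k} (h : y < ofKind κ n hn g)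
    (hnk : n < k) :
    y = node n hn g ∨
      ∃ (hn' : n + 1 ≤ k) (e : N (n + 1)), g ∈ e.1 ∧ y = node (n + 1) hn' e := by
  have hle := h.le
  cases κ
  · cases hle
    exact absurd h (lt_irrefl _)
  · cases hle with
    | refl => exact absurd h (lt_irrefl _)
    | node_prime => exact .inl rfl
    | e_prime m hm e x hx => exact .inr ⟨hm, e, hx, rfl⟩
    | q_prime => exact absurd hnk (lt_irrefl _)
  · cases hle with
    | refl => exact absurd h (lt_irrefl _)
    | node_dprime => exact .inl rfl
    | e_dprime m hm e x hx => exact .inr ⟨hm, e, hx, rfl⟩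
    | q_dprime => exact absurd hnk (lt_irrefl _)

lemma le_swap_of_lt {x y : Elt k} (h : y < x) (hx : x ≠ p) : y ≤ x.swap := by
  cases h.le with
  | refl => exact absurd h (lt_irrefl _)
  | node_p => exact absurd rfl hx
  | node_prime => exact Le.node_dprime ..
  | node_dprime => exact Le.node_prime ..
  | e_prime m hm e z hz => exact Le.e_dprime m hm e z hz
  | e_dprime m hm e z hz => exact Le.e_prime m hm e z hz
  | q_prime => exact Le.q_dprime ..
  | q_dprime => exact Le.q_prime ..

lemma eq_p_of_lt_of_le_swap {x y : Elt k} (h : y < x) (hx : x ≤ x.swap) : x = p := by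
  cases h.le with
  | refl => exact absurd h (lt_irrefl _)
  | node_p => rfl
  | _ => cases hx

end Elt

open UProd

abbrev Q (U : Ultrafilter ℕ) : Type := UProd U Elt

namespace Q

variable {U : Ultrafilter ℕ} {n : ℕ}

def p (U : Ultrafilter ℕ) : Q U := mk U fun _ => .p

def std (U : Ultrafilter ℕ) (κ : Kind) (n : ℕ) (g : N n) : Q U := mk U (Elt.std κ n g)

def EdgeThrough (U : Ultrafilter ℕ) (cf : ∀ k, Elt k) {n : ℕ} (g : N n) : Prop :=
  ∀ᶠ k in U, ∃ (h : n + 1 ≤ k) (e : N (n + 1)), g ∈ e.1 ∧ cf k = .node (n + 1) h e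

lemma eventually_ge (hU : (U : Filter ℕ) ≤ atTop) (n : ℕ) : ∀ᶠ k in U, n ≤ k :=
  (eventually_ge_atTop n).filter_mono hU

lemma std_ne_p {κ : Kind} {g : N n} : std U κ n g ≠ p U := fun h =>
  let ⟨_, hk⟩ := (mk_eq_mk.1 h).exists
  Elt.std_ne_p hk

lemma sigma_eq_of_std_eq (hU : (U : Filter ℕ) ≤ atTop) {m : ℕ} {κ κ' : Kind}
    {g : N n} {x : N m}
    (h : std U κ n g = std U κ' m x) : (⟨n, g⟩ : Σ n, N n) = ⟨m, x⟩ := by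
  obtain ⟨k, hk, hn, hm⟩ := ((mk_eq_mk.1 h).and
    ((eventually_ge hU n).and (eventually_ge hU m))).exists
  rw [Elt.std_of_le hn, Elt.std_of_le hm] at hk
  exact Elt.sigma_eq_of_ofKind_eq hk

lemma eq_p_of_p_le {c : Q U} (h : p U ≤ c) : c = p U := by
  obtain ⟨cf, rfl⟩ := mk_surjective c
  exact mk_eq_mk.2 ((mk_le_mk.1 h).mono fun _ => Elt.p_le)

lemma eq_std_node_of_le {c : Q U} {g : N n} (h : c ≤ std U .node n g) : c = std U .node n g := by
  obtain ⟨cf, rfl⟩ := mk_surjective c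
  exact mk_eq_mk.2 ((mk_le_mk.1 h).mono fun _ => Elt.eq_of_le_std_node)

lemma not_isBot (c : Q U) : ¬ IsBot c := fun h => by
  obtain ⟨cf, rfl⟩ := mk_surjective c
  obtain ⟨k, hp, hq⟩ := ((mk_le_mk.1 (h (p U))).and (mk_le_mk.1 (h (mk U fun _ => .q)))).exists
  exact Elt.not_le_p_of_le_q hp hq

lemma mem_or_eq_p_of_isLUB {T : Set (Q U)} {c : Q U} (h : IsLUB T c) : c ∈ T ∨ c = p U := by
  by_contra! hc
  obtain ⟨cf, rfl⟩ := mk_surjective c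
  have hlt : ∀ t ∈ T, t < mk U cf := fun t ht =>
    (h.1 ht).lt_of_ne fun htc => hc.1 (htc ▸ ht)
  have hne : ∀ᶠ k in U, cf k ≠ .p :=
    Ultrafilter.eventually_not.2 fun hp => hc.2 (mk_eq_mk.2 hp)
  have hswap : mk U cf ≤ mk U fun k => (cf k).swap := h.2 fun t ht => by
    obtain ⟨tf, rfl⟩ := mk_surjective t
    filter_upwards [mk_lt_mk.1 (hlt _ ht), hne] with k hk hk' using Elt.le_swap_of_lt hk hk'
  obtain ⟨t, ht⟩ := T.eq_empty_or_nonempty.resolve_left fun hT =>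
    not_isBot _ (isLUB_empty_iff.1 (hT ▸ h))
  obtain ⟨tf, rfl⟩ := mk_surjective t
  obtain ⟨k, hk, hk', hk''⟩ := ((mk_lt_mk.1 (hlt _ ht)).and ((mk_le_mk.1 hswap).and hne)).exists
  exact hk'' (Elt.eq_p_of_lt_of_le_swap hk hk')

lemma eq_p_or_eq_node_of_le_p {c : Q U} (h : c ≤ p U) :
    c = p U ∨ ∃ w : N 0, c = std U .node 0 w := by
  obtain ⟨cf, rfl⟩ := mk_surjective c
  rcases Ultrafilter.eventually_or.1 ((mk_le_mk.1 h).mono fun _ => Elt.le_p) with hp | hw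
  · exact .inl (mk_eq_mk.2 hp)
  obtain ⟨w, hw⟩ := Ultrafilter.eventually_exists_iff.1 hw
  refine .inr ⟨w, mk_eq_mk.2 (hw.mono fun k ⟨h0, hk⟩ => ?_)⟩
  rw [hk, Elt.std_of_le h0]
  rfl

lemma std_node_le_std {κ : Kind} {g : N n} {w : N 0} (h : leaves n g ⊆ {w}) :
    std U .node 0 w ≤ std U κ n g := by
  cases n with
  | zero =>
    obtain rfl : g = w := h (Set.mem_singleton g)
    refine mk_le_mk.2 (.of_forall fun k => ?_)
    rw [Elt.std_of_le k.zero_le, Elt.std_of_le k.zero_le]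
    exact Elt.node_le_ofKind
  | succ n => exact absurd h (leaves_nontrivial g).not_subset_singleton

lemma lt_std (hU : (U : Filter ℕ) ≤ atTop) {cf : ∀ k, Elt k} {κ : Kind} {g : N n}
    (h : mk U cf < std U κ n g) : mk U cf = std U .node n g ∨ EdgeThrough U cf g := by
  have hk : ∀ᶠ k in U, (∃ hn : n ≤ k, cf k = .node n hn g) ∨
      ∃ (hn' : n + 1 ≤ k) (e : N (n + 1)), g ∈ e.1 ∧ cf k = .node (n + 1) hn' e := by
    filter_upwards [mk_lt_mk.1 h, eventually_ge hU (n + 1)] with k hk hnk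
    rw [Elt.std_of_le (Nat.le_of_succ_le hnk)] at hk
    exact (Elt.lt_ofKind hk hnk).imp_left fun h => ⟨_, h⟩
  refine (Ultrafilter.eventually_or.1 hk).imp_left fun h =>
    mk_eq_mk.2 (h.mono fun k ⟨hn, hk⟩ => ?_)
  rw [hk, Elt.std_of_le hn]
  rfl

namespace EdgeThrough

variable {cf : ∀ k, Elt k} {g : N n}

lemma not_le_p (h : EdgeThrough U cf g) : ¬ mk U cf ≤ p U := fun hp => by
  obtain ⟨k, ⟨_, _, -, hk⟩, hkp⟩ := (h.and (mk_le_mk.1 hp)).exists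
  rw [hk] at hkp
  cases hkp

lemma level_eq {m : ℕ} {x : N m} (hg : EdgeThrough U cf g) (hx : EdgeThrough U cf x) : n = m := by
  obtain ⟨k, ⟨_, _, -, hg⟩, ⟨_, _, -, hx⟩⟩ := (hg.and hx).exists
  rw [hg] at hx
  injection hx with h
  omega

lemma eq_std_mkE {x : N n} (hg : EdgeThrough U cf g) (hx : EdgeThrough U cf x) (hne : g ≠ x) :
    mk U cf = std U .node (n + 1) (mkE g x hne) := by
  refine mk_eq_mk.2 ((hg.and hx).mono fun k ⟨⟨h, e, hge, hk⟩, ⟨_, e', hxe', hk'⟩⟩ => ?_)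
  obtain rfl : e = e' := by simpa [hk] using hk'
  rw [hk, Elt.std_of_le h]
  congr
  exact Subtype.ext ((Sym2.mem_and_mem_iff hne).1 ⟨hge, hxe'⟩)

lemma exists_lowerBound_not_le (hU : (U : Filter ℕ) ≤ atTop) (h : EdgeThrough U cf g) :
    ∃ z : Q U, (∀ κ ≠ Kind.node, z ≤ std U κ n g) ∧ ¬ z ≤ mk U cf := by
  choose e he using fun k => N.exists_edge_through_not_mem g
    (s := {e | ∃ h, cf k = .node (n + 1) h e}) fun e ⟨_, he⟩ e' ⟨_, he'⟩ => by
      simpa [he] using he'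
  refine ⟨mk U fun k => if h : n + 1 ≤ k then .node (n + 1) h (e k) else .q,
    fun κ hκ => ?_, fun hz => ?_⟩
  · filter_upwards [eventually_ge hU (n + 1)] with k hk
    rw [dif_pos hk, Elt.std_of_le (Nat.le_of_succ_le hk)]
    exact Elt.edge_le_ofKind hκ (he k).1
  · obtain ⟨k, ⟨hk, _, -, hcf⟩, hle⟩ := (h.and (mk_le_mk.1 hz)).exists
    rw [hcf, dif_pos hk] at hle
    exact (he k).2 ⟨hk, hcf.trans (Le.eq_of_le_node hle).symm⟩

end EdgeThrough

def cloud (U : Ultrafilter ℕ) (u : Fin 4) : Set (Q U) :=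
  {c | c = p U ∨ ∃ κ n g, u ∉ leaves n g ∧ c = std U κ n g}

variable {u : Fin 4}

lemma isUpperSet_cloud (hU : (U : Filter ℕ) ≤ atTop) (u : Fin 4) : IsUpperSet (cloud U u) := by
  rintro a b hab (rfl | ⟨κ, n, g, hu, rfl⟩)
  · exact .inl (eq_p_of_p_le hab)
  obtain ⟨bf, rfl⟩ := mk_surjective b
  have hb : ∀ᶠ k in U, bf k = .p ∨ ∃ κ', ∃ m ∈ Set.Iic n, ∃ x : N m,
      leaves m x ⊆ leaves n g ∧ ∃ hm : m ≤ k, bf k = .ofKind κ' m hm x := by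
    filter_upwards [mk_le_mk.1 hab, eventually_ge hU n] with k hk hn
    rw [Elt.std_of_le hn] at hk
    exact Elt.ofKind_le hk
  rcases Ultrafilter.eventually_or.1 hb with hp | hb
  · exact .inl (mk_eq_mk.2 hp)
  obtain ⟨κ', hb⟩ := Ultrafilter.eventually_exists_iff.1 hb
  obtain ⟨m, -, hb⟩ := (Ultrafilter.eventually_exists_mem_iff (Set.finite_Iic n)).1 hb
  obtain ⟨x, hb⟩ := Ultrafilter.eventually_exists_iff.1 hb
  obtain ⟨_, hsub, -⟩ := hb.exists
  refine .inr ⟨κ', m, x, fun hux => hu (hsub hux),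
    mk_eq_mk.2 (hb.mono fun k ⟨_, hm, hk⟩ => ?_)⟩
  rw [hk, Elt.std_of_le hm]

lemma lt_mem_cloud_cases (hU : (U : Filter ℕ) ≤ atTop) {cf : ∀ k, Elt k} {t : Q U}
    (hlt : mk U cf < t) (ht : t ∈ cloud U u) (hc : mk U cf ∉ cloud U u) :
    t = p U ∨
      ∃ κ ≠ Kind.node, ∃ n g, u ∉ leaves n g ∧ t = std U κ n g ∧ EdgeThrough U cf g := by
  rcases ht with rfl | ⟨κ, n, g, hu, rfl⟩
  · exact .inl rfl
  rcases lt_std hU hlt with heq | hedge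
  · exact absurd (.inr ⟨.node, n, g, hu, heq⟩) hc
  refine .inr ⟨κ, ?_, n, g, hu, rfl, hedge⟩
  rintro rfl
  exact hc (.inr ⟨.node, n, g, hu, eq_std_node_of_le hlt.le⟩)

lemma mem_cloud_of_isGLB (hU : (U : Filter ℕ) ≤ atTop) {S : Set (Q U)} {c : Q U}
    (hS : S ⊆ cloud U u) (h : IsGLB S c) : c ∈ cloud U u := by
  by_cases hcS : c ∈ S
  · exact hS hcS
  by_contra hc
  obtain ⟨cf, rfl⟩ := mk_surjective c
  have key := fun (t : Q U) (ht : t ∈ S) =>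
    lt_mem_cloud_cases hU ((h.1 ht).lt_of_ne fun hct => hcS (hct ▸ ht)) (hS ht) hc
  by_cases hp : ∀ t ∈ S, t = p U
  · exact hc (.inl (eq_p_of_p_le (h.2 fun t ht => (hp t ht).ge)))
  simp only [not_forall] at hp
  obtain ⟨t₁, ht₁, ht₁p⟩ := hp
  obtain ⟨-, -, n, g, hu, -, hedge⟩ := (key t₁ ht₁).resolve_left ht₁p
  have hS' : ∀ t ∈ S, ∃ κ ≠ Kind.node, t = std U κ n g := by
    intro t ht
    rcases key t ht with rfl | ⟨κ, hκ, m, x, hux, rfl, hedge'⟩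
    · exact absurd (h.1 ht) hedge.not_le_p
    obtain rfl := hedge.level_eq hedge'
    by_cases hgx : g = x
    · exact ⟨κ, hκ, hgx ▸ rfl⟩
    refine absurd (.inr ⟨.node, n + 1, mkE g x hgx, ?_, hedge.eq_std_mkE hedge' hgx⟩) hc
    rw [leaves_mkE]
    exact fun h => h.elim hu hux
  obtain ⟨z, hzS, hzc⟩ := hedge.exists_lowerBound_not_le hU
  exact hzc (h.2 fun t ht => by
    obtain ⟨κ, hκ, rfl⟩ := hS' t ht
    exact hzS κ hκ)

lemma exists_mem_cloud_of_isLUB {T : Set (Q U)} {c : Q U} (h : IsLUB T c)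
    (hc : c ∈ cloud U u) : ∃ t ∈ T, t ∈ cloud U u := by
  rcases mem_or_eq_p_of_isLUB h with hcT | rfl
  · exact ⟨c, hcT, hc⟩
  by_contra! hT
  have hub : std U .node 0 u ∈ upperBounds T := by
    intro t ht
    rcases eq_p_or_eq_node_of_le_p (h.1 ht) with rfl | ⟨w, rfl⟩
    · exact absurd (.inl rfl) (hT _ ht)
    obtain rfl : w = u := by
      by_contra hw
      exact hT _ ht (.inr ⟨.node, 0, w, Ne.symm hw, rfl⟩)
    exact le_rfl
  exact std_ne_p (eq_p_of_p_le (h.2 hub))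

lemma isFinPrimeFilter_cloud (hU : (U : Filter ℕ) ≤ atTop) (u : Fin 4) :
    IsFinPrimeFilter (cloud U u) :=
  .of_isUpperSet (isUpperSet_cloud hU u) (fun _ _ _ h hS => mem_cloud_of_isGLB hU hS h)
    fun _ _ _ h hc => exists_mem_cloud_of_isLUB h hc

lemma isFinPrimeFilter_Ici {a : Q U} (ha : ¬ a ≤ p U) : IsFinPrimeFilter (Set.Ici a) :=
  .of_isUpperSet (isUpperSet_Ici a) (fun _ _ _ h hS => h.2 hS) fun _ _ c h hac =>
    (mem_or_eq_p_of_isLUB h).elim (fun hcT => ⟨c, hcT, hac⟩) fun hcp => absurd (hcp ▸ hac) ha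

lemma exists_mem_cloud_of_le_p {a : Q U} (ha : a ≤ p U) {s : Set (Fin 4)} (hs : s.Nonempty)
    (hsw : ∀ w, a = std U .node 0 w → ¬ s ⊆ {w}) : ∃ u ∈ s, a ∈ cloud U u := by
  rcases eq_p_or_eq_node_of_le_p ha with rfl | ⟨w, rfl⟩
  · obtain ⟨u, hu⟩ := hs
    exact ⟨u, hu, .inl rfl⟩
  obtain ⟨u, hu, huw⟩ := Set.not_subset.1 (hsw w rfl)
  exact ⟨u, hu, .inr ⟨.node, 0, w, huw, rfl⟩⟩

lemma exists_cloud_separating (hU : (U : Filter ℕ) ≤ atTop) {a b : Q U} (ha : a ≤ p U)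
    (hab : ¬ a ≤ b) : ∃ u, a ∈ cloud U u ∧ b ∉ cloud U u := by
  have hbp : b ≠ p U := fun hb => hab (hb ▸ ha)
  by_cases hb : ∃ κ n g, b = std U κ n g
  · obtain ⟨κ, n, g, rfl⟩ := hb
    obtain ⟨u, hu, hau⟩ := exists_mem_cloud_of_le_p ha (leaves_nonempty g)
      fun w hw hsub => hab (hw ▸ std_node_le_std hsub)
    refine ⟨u, hau, ?_⟩
    rintro (hp | ⟨κ', m, x, hux, h⟩)
    · exact hbp hp
    cases sigma_eq_of_std_eq hU h
    exact hux hu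
  · obtain ⟨u, -, hau⟩ := exists_mem_cloud_of_le_p ha Set.univ_nonempty
      fun w _ h => (Set.nontrivial_univ (α := Fin 4)).not_subset_singleton h
    refine ⟨u, hau, ?_⟩
    rintro (hp | ⟨κ, n, g, -, h⟩)
    exacts [hbp hp, hb ⟨κ, n, g, h⟩]

lemma exists_isFinPrimeFilter_separating (hU : (U : Filter ℕ) ≤ atTop) (a b : Q U)
    (hab : ¬ a ≤ b) : ∃ F, IsFinPrimeFilter F ∧ a ∈ F ∧ b ∉ F := by
  by_cases ha : a ≤ p U
  · obtain ⟨u, hau, hbu⟩ := exists_cloud_separating hU ha hab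
    exact ⟨cloud U u, isFinPrimeFilter_cloud hU u, hau, hbu⟩
  · exact ⟨Set.Ici a, isFinPrimeFilter_Ici ha, Set.mem_Ici.2 le_rfl, hab⟩

end Q

/-- For a non-principal ultrafilter `U` on `ω`, the ultraproduct
`∏_U P_i` of the posets `P_0, P_1, P_2, …` is `(ω,ω)`-representable. -/
theorem statement14 (U : Ultrafilter ℕ) (hU : ∀ i : ℕ, U ≠ pure i) :
    IsRepresentable ℵ₀ ℵ₀ (UProd U Elt) := by
  have hU' : (U : Filter ℕ) ≤ atTop := by
    rcases U.le_cofinite_or_eq_pure with h | ⟨i, hi⟩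
    · rwa [Nat.cofinite_eq_atTop] at h
    · exact absurd hi (hU i)
  exact isRepresentable_of_separating (Q.exists_isFinPrimeFilter_separating hU')
end
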